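/- Let A be the 4×4 circulant matrix [[0,a₁,a₂,a₃],[a₃,0,a₁,a₂],[a₂,a₃,0,a₁],[a₁,a₂,a₃,0]] with a₂ > 0 and a₁ + a₂ + a₃ > 0 and a₁ + a₃ > a₂ (hence all non-trivial eigenvalues have negative real part). Then ⟨Ax, x⟩ < 0 for every nonzero x ∈ ℝ⁴ with x₁ + x₂ + x₃ + x₄ = 0. -/

import Mathlib

/-!
On the zero-sum hyperplane only the Fourier modes `k = 1, 2, 3` of `x` survive. The
mode `k = 2` has amplitude `x₀ + x₂ = -(x₁ + x₃)`, and the conjugate pair `k = 1, 3` is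
carried by `(x₀ - x₂, x₁ - x₃)`. On these coordinates the symmetric part of the circulant
acts diagonally with eigenvalues `a₂ - (a₁ + a₃)` and `-a₂`, both negative by hypothesis.
-/

open Matrix

lemma circulant_mulVec_dotProduct_of_sum_eq_zero (a1 a2 a3 : ℝ) (x : Fin 4 → ℝ)
    (hx : ∑ i, x i = 0) :
    !![0, a1, a2, a3; a3, 0, a1, a2; a2, a3, 0, a1; a1, a2, a3, 0] *ᵥ x ⬝ᵥ x =
      (a2 - (a1 + a3)) * (x 0 + x 2) ^ 2 - a2 / 2 * ((x 0 - x 2) ^ 2 + (x 1 - x 3) ^ 2) := by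
  rw [Fin.sum_univ_four] at hx
  have hx3 : x 3 = -(x 0 + x 1 + x 2) := by linarith
  simp only [dotProduct, mulVec, of_apply, cons_val', cons_val_fin_one, Fin.sum_univ_four,
    cons_val_zero, cons_val_one, Matrix.cons_val, zero_mul, zero_add, add_zero]
  rw [hx3]
  ring

lemma eq_zero_of_sum_eq_zero_of_fourier_eq_zero (x : Fin 4 → ℝ) (hx : ∑ i, x i = 0)
    (h02 : x 0 + x 2 = 0) (h0 : x 0 - x 2 = 0) (h1 : x 1 - x 3 = 0) : x = 0 := by
  rw [Fin.sum_univ_four] at hx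
  ext i
  fin_cases i <;> simp <;> linarith

lemma mul_sq_sub_mul_sq_add_sq_neg {α β u p q : ℝ} (hα : α < 0) (hβ : 0 < β)
    (h : u ≠ 0 ∨ p ≠ 0 ∨ q ≠ 0) : α * u ^ 2 - β * (p ^ 2 + q ^ 2) < 0 := by
  rcases h with hu | hp | hq
  · nlinarith [mul_neg_of_neg_of_pos hα (sq_pos_of_ne_zero hu), sq_nonneg p, sq_nonneg q]
  · nlinarith [mul_pos hβ (sq_pos_of_ne_zero hp), sq_nonneg u, sq_nonneg q]
  · nlinarith [mul_pos hβ (sq_pos_of_ne_zero hq), sq_nonneg u, sq_nonneg p]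

theorem stmt10_general (a1 a2 a3 : ℝ) (h1 : 0 < a2)
    (h3 : a2 < a1 + a3) :
    let A : Matrix (Fin 4) (Fin 4) ℝ :=
      !![0, a1, a2, a3; a3, 0, a1, a2; a2, a3, 0, a1; a1, a2, a3, 0]
    ∀ x : Fin 4 → ℝ, x ≠ 0 → ∑ i, x i = 0 → A.mulVec x ⬝ᵥ x < 0 := by
  intro A x hx hsum
  rw [circulant_mulVec_dotProduct_of_sum_eq_zero a1 a2 a3 x hsum]
  refine mul_sq_sub_mul_sq_add_sq_neg (by linarith) (by positivity) ?_
  by_contra! h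
  exact hx (eq_zero_of_sum_eq_zero_of_fourier_eq_zero x hsum h.1 h.2.1 h.2.2)

/-- For the 4×4 circulant with first row `(0,a₁,a₂,a₃)`, if `a₂ > 0`, `a₁+a₂+a₃ > 0`
and `a₁+a₃ > a₂`, then `⟨Ax, x⟩ < 0` for every nonzero zero-sum `x ∈ ℝ⁴`. -/
theorem stmt10 (a1 a2 a3 : ℝ) (h1 : 0 < a2) (h2 : 0 < a1 + a2 + a3)
    (h3 : a2 < a1 + a3) :
    let A : Matrix (Fin 4) (Fin 4) ℝ :=
      !![0, a1, a2, a3; a3, 0, a1, a2; a2, a3, 0, a1; a1, a2, a3, 0]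
    ∀ x : Fin 4 → ℝ, x ≠ 0 → ∑ i, x i = 0 → A.mulVec x ⬝ᵥ x < 0 :=
  stmt10_general a1 a2 a3 h1 h3
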